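/- arXiv:1607.06023 — 5 statements merged into one kernel-verified Lean document; each statement's English description precedes it below -/
import Mathlib

section
/- Let s be a global section of the activation sheaf A on X, and let n be a node whose active region active(s, n) = { c ∈ X : s(c) = n } is nonempty. Then the singleton {n} belongs to active(s, n). -/
/-- A finite abstract simplicial complex: a finite collection of nonempty finite
subsets of the vertex type `N`, closed under taking nonempty subsets. -/
def IsComplex {N : Type*} (X : Finset (Finset N)) : Prop :=
  ∀ c ∈ X, c.Nonempty ∧ ∀ b : Finset N, b ⊆ c → b.Nonempty → b ∈ X

/-- `n` lies in the stalk of the activation sheaf at the cell `c` (apart from `⊥`):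
`n` shares a coface with `c`. -/
def InStalk {N : Type*} (X : Finset (Finset N)) (c : Finset N) (n : N) : Prop :=
  ∃ d ∈ X, c ⊆ d ∧ n ∈ d

/-- A global section of the activation sheaf, encoded as a function assigning to each
cell either a node (`some n`) or `⊥` (`none`): the value at each cell lies in the
stalk, and the values are compatible with the restriction maps, which send `n` to `n`
when `n` is in the stalk of the larger cell and to `⊥` otherwise. -/
def IsSection {N : Type*} (X : Finset (Finset N)) (s : Finset N → Option N) : Prop :=
  (∀ c ∈ X, ∀ n : N, s c = some n → InStalk X c n) ∧
  (∀ c ∈ X, ∀ d ∈ X, c ⊆ d → ∀ n : N, s c = some n →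
    (InStalk X d n → s d = some n) ∧ (¬ InStalk X d n → s d = none)) ∧
  (∀ c ∈ X, ∀ d ∈ X, c ⊆ d → s c = none → s d = none)

/-! A node `n` active on a cell `c` lies in some coface `d` of `c`, and restriction keeps `n`
active on `d`. The vertex `{n}` is a face of `d`, and restriction from `{n}` to `d` can only
produce `⊥` or the value at `{n}`; since it produces `n`, the section takes the value `n`
at `{n}`. -/

section

variable {N : Type*} {X : Finset (Finset N)}

theorem IsComplex.singleton_mem (hX : IsComplex X) {d : Finset N} (hd : d ∈ X) {n : N}
    (hn : n ∈ d) : {n} ∈ X :=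
  (hX d hd).2 {n} (Finset.singleton_subset_iff.mpr hn) (Finset.singleton_nonempty n)

namespace IsSection

variable {s : Finset N → Option N}

theorem exists_coface_mem_apply_eq (hs : IsSection X s) {c : Finset N} (hc : c ∈ X) {n : N}
    (hsc : s c = some n) : ∃ d ∈ X, c ⊆ d ∧ n ∈ d ∧ s d = some n := by
  obtain ⟨d, hd, hcd, hnd⟩ := hs.1 c hc n hsc
  exact ⟨d, hd, hcd, hnd, (hs.2.1 c hc d hd hcd n hsc).1 ⟨d, hd, subset_rfl, hnd⟩⟩

theorem apply_eq_of_subset (hs : IsSection X s) {c d : Finset N} (hc : c ∈ X) (hd : d ∈ X)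
    (hcd : c ⊆ d) {n : N} (hsd : s d = some n) : s c = some n := by
  cases hsc : s c with
  | none => simp [hs.2.2 c hc d hd hcd hsc] at hsd
  | some m =>
    have hrestrict := hs.2.1 c hc d hd hcd m hsc
    by_cases hm : InStalk X d m
    · rw [← hsd, hrestrict.1 hm]
    · simp [hrestrict.2 hm] at hsd

end IsSection

end

theorem vertex_mem_activeRegion_general {N : Type*} (X : Finset (Finset N))
    (hX : IsComplex X) (s : Finset N → Option N) (hs : IsSection X s) (n : N)
    (hne : ∃ c ∈ X, s c = some n) :
    {n} ∈ X ∧ s {n} = some n := by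
  obtain ⟨c, hc, hsc⟩ := hne
  obtain ⟨d, hd, -, hnd, hsd⟩ := hs.exists_coface_mem_apply_eq hc hsc
  have hnX : {n} ∈ X := hX.singleton_mem hd hnd
  exact ⟨hnX, hs.apply_eq_of_subset hnX hd (Finset.singleton_subset_iff.mpr hnd) hsd⟩

/-- If the active region of a node `n` is nonempty, then the vertex `{n}` belongs to it. -/
theorem vertex_mem_activeRegion {N : Type*} [DecidableEq N] (X : Finset (Finset N))
    (hX : IsComplex X) (s : Finset N → Option N) (hs : IsSection X s) (n : N)
    (hne : ∃ c ∈ X, s c = some n) :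
    {n} ∈ X ∧ s {n} = some n :=
  vertex_mem_activeRegion_general X hX s hs n hne
end

section
/- Let s be a global section of the activation sheaf A on X. If a cell c lies in the star of the active region of a node n but is not itself in the active region of n, then s(c) = ⊥. Consequently, the star of active(s, n) intersects no active region active(s, m) for any node m ≠ n. -/
theorem IsSection.eq_some_or_eq_none_of_subset {N : Type*} {X : Finset (Finset N)}
    {s : Finset N → Option N} (hs : IsSection X s) {b c : Finset N} (hb : b ∈ X) (hc : c ∈ X)
    (hbc : b ⊆ c) {n : N} (hsb : s b = some n) : s c = some n ∨ s c = none :=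
  let ⟨hstalk, hnotStalk⟩ := hs.2.1 b hb c hc hbc n hsb
  (em (InStalk X c n)).imp hstalk hnotStalk

theorem star_activeRegion_disjoint_general {N : Type*} (X : Finset (Finset N))
    (s : Finset N → Option N) (hs : IsSection X s) (n : N) :
    (∀ c ∈ X, (∃ b ∈ X, s b = some n ∧ b ⊆ c) → s c ≠ some n → s c = none) ∧
    (∀ c ∈ X, (∃ b ∈ X, s b = some n ∧ b ⊆ c) → ∀ m : N, m ≠ n → s c ≠ some m) := by
  have star : ∀ c ∈ X, (∃ b ∈ X, s b = some n ∧ b ⊆ c) → s c = some n ∨ s c = none :=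
    fun c hc ⟨b, hb, hsb, hbc⟩ => hs.eq_some_or_eq_none_of_subset hb hc hbc hsb
  refine ⟨fun c hc hstar => (star c hc hstar).resolve_left, fun c hc hstar m hmn hsm => ?_⟩
  rcases star c hc hstar with hsc | hsc <;> rw [hsc] at hsm
  · exact hmn (Option.some.inj hsm).symm
  · exact Option.some_ne_none m hsm.symm

/-- If a cell lies in the star of the active region of `n` but not in the active
region itself, then the section takes the value `⊥` there; consequently the star of
the active region of `n` meets no active region of any other node. -/
theorem star_activeRegion_disjoint {N : Type*} (X : Finset (Finset N))
    (hX : IsComplex X) (s : Finset N → Option N) (hs : IsSection X s) (n : N) :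
    (∀ c ∈ X, (∃ b ∈ X, s b = some n ∧ b ⊆ c) → s c ≠ some n → s c = none) ∧
    (∀ c ∈ X, (∃ b ∈ X, s b = some n ∧ b ⊆ c) → ∀ m : N, m ≠ n → s c ≠ some m) :=
  star_activeRegion_disjoint_general X s hs n
end

section
/- The active region of a node is independent of the global section: if r and s are global sections of the activation sheaf A on X, and n is a node with both active(s, n) and active(r, n) nonempty, then active(s, n) = active(r, n). -/
/-! A section that takes the value `n` at some cell takes it at every cell whose stalk contains
`n`. Each of the two cells lies, together with the vertex `{n}`, in a simplex containing `n`;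
compatibility carries the value up to such a simplex and back down, so it travels from the one
cell to the other through `{n}`. -/

namespace IsComplex

variable {N : Type*} {X : Finset (Finset N)}

theorem mem_of_subset (hX : IsComplex X) {b d : Finset N} (hd : d ∈ X) (hbd : b ⊆ d)
    (hb : b.Nonempty) : b ∈ X :=
  (hX d hd).2 b hbd hb

end IsComplex

namespace IsSection

open Finset

variable {N : Type*} {X : Finset (Finset N)} {s : Finset N → Option N}

theorem eq_some_of_subset (hs : IsSection X s) {c d : Finset N} (hc : c ∈ X) (hd : d ∈ X)
    (hcd : c ⊆ d) {n : N} (hn : s d = some n) : s c = some n := by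
  rcases hsc : s c with _ | m
  · simpa [hn] using hs.2.2 c hc d hd hcd hsc
  · by_cases hm : InStalk X d m
    · rw [← hn, (hs.2.1 c hc d hd hcd m hsc).1 hm]
    · simpa [hn] using (hs.2.1 c hc d hd hcd m hsc).2 hm

theorem eq_some_of_union_subset [DecidableEq N] (hX : IsComplex X) (hs : IsSection X s)
    {a b d : Finset N} (ha : a ∈ X) (hb : b ∈ X) (hd : d ∈ X) (habd : a ∪ b ⊆ d) {n : N}
    (hnd : n ∈ d) (hn : s a = some n) : s b = some n := by
  have hab : a ∪ b ∈ X := hX.mem_of_subset hd habd ((hX a ha).1.mono subset_union_left)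
  have hsab : s (a ∪ b) = some n :=
    (hs.2.1 a ha _ hab subset_union_left n hn).1 ⟨d, hd, habd, hnd⟩
  exact hs.eq_some_of_subset hb hab subset_union_right hsab

theorem eq_some_iff_inStalk (hX : IsComplex X) (hs : IsSection X s) {c₀ : Finset N}
    (hc₀ : c₀ ∈ X) {n : N} (hn : s c₀ = some n) {c : Finset N} (hc : c ∈ X) :
    s c = some n ↔ InStalk X c n := by
  classical
  refine ⟨hs.1 c hc n, fun ⟨d, hd, hcd, hnd⟩ => ?_⟩
  obtain ⟨d₀, hd₀, hc₀d₀, hnd₀⟩ := hs.1 c₀ hc₀ n hn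
  have hvertex : ({n} : Finset N) ∈ X :=
    hX.mem_of_subset hd (singleton_subset_iff.2 hnd) (singleton_nonempty n)
  have hsn : s {n} = some n :=
    hs.eq_some_of_union_subset hX hc₀ hvertex hd₀
      (union_subset hc₀d₀ (singleton_subset_iff.2 hnd₀)) hnd₀ hn
  exact hs.eq_some_of_union_subset hX hvertex hc hd
    (union_subset (singleton_subset_iff.2 hnd) hcd) hnd hsn

end IsSection

/-- The active region of a node is independent of the global section: if both active
regions are nonempty then they coincide. -/
theorem activeRegion_section_independent {N : Type*} (X : Finset (Finset N))
    (hX : IsComplex X) (r s : Finset N → Option N)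
    (hr : IsSection X r) (hs : IsSection X s) (n : N)
    (hrne : ∃ c ∈ X, r c = some n) (hsne : ∃ c ∈ X, s c = some n) :
    ∀ c ∈ X, s c = some n ↔ r c = some n := by
  obtain ⟨cr, hcr, hrn⟩ := hrne
  obtain ⟨cs, hcs, hsn⟩ := hsne
  intro c hc
  rw [hs.eq_some_iff_inStalk hX hcs hsn hc, hr.eq_some_iff_inStalk hX hcr hrn hc]
end

section
/- For an activation sheaf on a finite link complex with at least one cell, the assignment sending every cell to ⊥ is a global section (the empty transmission pattern), and for each node n the assignment sending each cell c to n if c ∪ {n} ∈ X and to ⊥ otherwise is a global section, provided X is the clique complex of its 1-skeleton. -/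
theorem isSection_const_none {N : Type*} (X : Finset (Finset N)) :
    IsSection X (fun _ => none) :=
  ⟨fun _ _ _ h => (nomatch h), fun _ _ _ _ _ _ h => (nomatch h), fun _ _ _ _ _ _ => rfl⟩

theorem InStalk.mono {N : Type*} {X : Finset (Finset N)} {c d : Finset N} {n : N}
    (hcd : c ⊆ d) (h : InStalk X d n) : InStalk X c n :=
  let ⟨e, he, hde, hne⟩ := h
  ⟨e, he, hcd.trans hde, hne⟩

open Classical in
theorem isSection_ite_inStalk {N : Type*} (X : Finset (Finset N)) (n : N) :
    IsSection X (fun c => if InStalk X c n then some n else none) := by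
  refine ⟨fun c _ m h => ?_, fun c _ d _ _ m h => ?_, fun c _ d _ hcd h => ?_⟩ <;>
    dsimp only at h ⊢
  · split_ifs at h with hc
    exact Option.some_injective _ h ▸ hc
  · split_ifs at h with hc
    cases h
    exact ⟨fun hd => if_pos hd, fun hd => if_neg hd⟩
  · split_ifs at h with hc
    exact if_neg fun hd => hc (hd.mono hcd)

theorem IsComplex.inStalk_iff_insert_mem {N : Type*} [DecidableEq N] {X : Finset (Finset N)}
    (hX : IsComplex X) {c : Finset N} {n : N} : InStalk X c n ↔ insert n c ∈ X := by
  refine ⟨fun ⟨d, hd, hcd, hnd⟩ => ?_, fun h => ⟨_, h, Finset.subset_insert n c,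
    Finset.mem_insert_self n c⟩⟩
  exact (hX d hd).2 _ (Finset.insert_subset hnd hcd) (Finset.insert_nonempty n c)

theorem blank_and_single_transmitter_sections_general {N : Type*} [DecidableEq N]
    (X : Finset (Finset N)) (hX : IsComplex X) :
    IsSection X (fun _ => none) ∧
    ∀ n : N, ({n} : Finset N) ∈ X →
      IsSection X (fun c => if insert n c ∈ X then some n else none) := by
  classical
  refine ⟨isSection_const_none X, fun n _ => ?_⟩
  convert isSection_ite_inStalk X n using 3 with c
  exact hX.inStalk_iff_insert_mem.symm

/-- For a clique complex, the all-`⊥` assignment is a global section of the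
activation sheaf, and for each node `n` the assignment sending `c` to `n` when
`c ∪ {n} ∈ X` and to `⊥` otherwise is a global section. -/
theorem blank_and_single_transmitter_sections {N : Type*} [DecidableEq N]
    (X : Finset (Finset N)) (hX : IsComplex X) (hXne : X.Nonempty)
    (hclique : ∀ c : Finset N, c.Nonempty → (∀ v ∈ c, ({v} : Finset N) ∈ X) →
      (c ∈ X ↔ ∀ u ∈ c, ∀ v ∈ c, u ≠ v → ({u, v} : Finset N) ∈ X)) :
    IsSection X (fun _ => none) ∧
    ∀ n : N, ({n} : Finset N) ∈ X →
      IsSection X (fun c => if insert n c ∈ X then some n else none) :=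
  blank_and_single_transmitter_sections_general X hX
end

section
/- In the time-dependent link complex (the clique complex of the time-dependent link graph), every cell of dimension at least 1 (containing at least two vertices) either lies entirely within a single timeslice, or is exactly an edge of the form {(n, t), (n, t+1)} for a single node n. -/
/-- The edge relation of the time-dependent link graph on vertex set `N × ℤ`. -/
def TimeLinkAdj {N : Type*} (s : N → ℤ → N → ℝ) (T : ℝ) (a b : N × ℤ) : Prop :=
  (a.2 = b.2 ∧ a.1 ≠ b.1 ∧ s a.1 a.2 b.1 > T ∧ s b.1 b.2 a.1 > T) ∨
  (a.1 = b.1 ∧ (b.2 = a.2 + 1 ∨ a.2 = b.2 + 1))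

/-- A cell of the time-dependent link complex (the clique complex of the
time-dependent link graph): a nonempty finite set of vertices, pairwise adjacent. -/
def TimeLinkCell {N : Type*} (s : N → ℤ → N → ℝ) (T : ℝ) (c : Finset (N × ℤ)) : Prop :=
  c.Nonempty ∧ ∀ a ∈ c, ∀ b ∈ c, a ≠ b → TimeLinkAdj s T a b

/-!
Two adjacent vertices at different times are consecutive copies of one node. So if a cell
contains vertices `a`, `b` at different times, any third vertex `v` would be a copy of the same
node at a time differing by exactly one from both `a.2` and `b.2`, which themselves differ by
one: impossible by parity. Hence such a cell is the edge `{a, b}`.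
-/

section

variable {N : Type*} {s : N → ℤ → N → ℝ} {T : ℝ}

theorem TimeLinkAdj.fst_eq_of_snd_ne {a b : N × ℤ} (h : TimeLinkAdj s T a b) (hab : a.2 ≠ b.2) :
    a.1 = b.1 ∧ (b.2 = a.2 + 1 ∨ a.2 = b.2 + 1) :=
  h.resolve_left fun h' => hab h'.1

theorem TimeLinkCell.fst_eq_of_snd_ne {c : Finset (N × ℤ)} (hc : TimeLinkCell s T c)
    {a b : N × ℤ} (ha : a ∈ c) (hb : b ∈ c) (hab : a.2 ≠ b.2) :
    a.1 = b.1 ∧ (b.2 = a.2 + 1 ∨ a.2 = b.2 + 1) :=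
  (hc.2 a ha b hb (ne_of_apply_ne Prod.snd hab)).fst_eq_of_snd_ne hab

theorem TimeLinkCell.mem_pair_of_snd_ne {c : Finset (N × ℤ)} (hc : TimeLinkCell s T c)
    {a b v : N × ℤ} (ha : a ∈ c) (hb : b ∈ c) (hab : a.2 ≠ b.2) (hv : v ∈ c) :
    v = a ∨ v = b := by
  by_contra! ⟨hva, hvb⟩
  obtain ⟨hab₁, hab₂⟩ := hc.fst_eq_of_snd_ne ha hb hab
  by_cases hva₂ : v.2 = a.2
  · exact hva (Prod.ext ((hc.fst_eq_of_snd_ne hv hb (hva₂ ▸ hab)).1.trans hab₁.symm) hva₂)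
  by_cases hvb₂ : v.2 = b.2
  · exact hvb (Prod.ext ((hc.fst_eq_of_snd_ne hv ha (hvb₂ ▸ hab.symm)).1.trans hab₁) hvb₂)
  have hva' := (hc.fst_eq_of_snd_ne hv ha hva₂).2
  have hvb' := (hc.fst_eq_of_snd_ne hv hb hvb₂).2
  omega

theorem TimeLinkCell.eq_pair_of_snd_ne [DecidableEq N] {c : Finset (N × ℤ)}
    (hc : TimeLinkCell s T c) {a b : N × ℤ} (ha : a ∈ c) (hb : b ∈ c) (hab : a.2 ≠ b.2) :
    c = {a, b} := by
  refine (Finset.insert_subset ha (Finset.singleton_subset_iff.2 hb)).antisymm' fun v hv => ?_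
  rcases hc.mem_pair_of_snd_ne ha hb hab hv with rfl | rfl <;> simp

end

theorem timeLink_cells_classified_general {N : Type*} [DecidableEq N]
    (s : N → ℤ → N → ℝ) (T : ℝ) (c : Finset (N × ℤ))
    (hc : TimeLinkCell s T c) :
    (∃ t : ℤ, ∀ v ∈ c, v.2 = t) ∨
    (∃ (n : N) (t : ℤ), c = {(n, t), (n, t + 1)}) := by
  by_cases hslice : ∃ t : ℤ, ∀ v ∈ c, v.2 = t
  · exact Or.inl hslice
  right
  obtain ⟨a, ha⟩ := hc.1
  obtain ⟨b, hb, hab⟩ : ∃ b ∈ c, a.2 ≠ b.2 := by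
    by_contra! h
    exact hslice ⟨a.2, fun v hv => (h v hv).symm⟩
  rw [hc.eq_pair_of_snd_ne ha hb hab]
  obtain ⟨hab₁, hab₂⟩ := hc.fst_eq_of_snd_ne ha hb hab
  obtain ⟨n, t⟩ := a
  obtain ⟨m, u⟩ := b
  dsimp only at hab₁ hab₂
  subst hab₁
  rcases hab₂ with rfl | rfl
  · exact ⟨n, t, rfl⟩
  · exact ⟨n, u, Finset.pair_comm _ _⟩

/-- Every cell of the time-dependent link complex with at least two vertices either
lies entirely within a single timeslice, or is exactly an edge `{(n,t), (n,t+1)}`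
joining two consecutive copies of a single node. -/
theorem timeLink_cells_classified {N : Type*} [DecidableEq N]
    (s : N → ℤ → N → ℝ) (T : ℝ) (c : Finset (N × ℤ))
    (hc : TimeLinkCell s T c) (hcard : 2 ≤ c.card) :
    (∃ t : ℤ, ∀ v ∈ c, v.2 = t) ∨
    (∃ (n : N) (t : ℤ), c = {(n, t), (n, t + 1)}) :=
  timeLink_cells_classified_general s T c hc
end
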